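/- arXiv:2510.02223 — 2 statements merged into one kernel-verified Lean document; each statement's English description precedes it below -/
import Mathlib

section
/- Strict Farkas lemma (reverse direction): if every λ ∈ ℝ^n with λ ≥ 0 componentwise, Σ_i λ_i = 1, and λᵀA = 0 satisfies λᵀb > 0, then there exists u ∈ ℝ^m with A u < b componentwise. -/
/-!
If no `u` satisfies `A u < b`, the subspace `range A` misses the open box `{x | x < b}`, so
Hahn–Banach separates them by a functional `x ↦ w ⬝ᵥ x`. Being bounded below on a subspace, it
vanishes there, i.e. `wᵀ A = 0`; being bounded above on the box, whose recession cone is the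
nonpositive orthant, it has `w ≥ 0` and `w ⬝ᵥ b ≤ 0`. Rescaling `w` to sum `1` contradicts the
hypothesis.
-/

open Set Matrix

theorem LinearMap.apply_nonpos_of_le_on_cone {𝕜 M : Type*} [Field 𝕜] [LinearOrder 𝕜]
    [IsStrictOrderedRing 𝕜] [AddCommMonoid M] [Module 𝕜 M] {K : Set M}
    (hK : ∀ x ∈ K, ∀ t : 𝕜, 0 < t → t • x ∈ K) (g : M →ₗ[𝕜] 𝕜) {c : 𝕜}
    (hg : ∀ x ∈ K, g x ≤ c) {x : M} (hx : x ∈ K) : g x ≤ 0 := by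
  by_contra! hgx
  have hc := hg _ (hK x hx ((|c| + 1) / g x) (by positivity))
  rw [map_smul, smul_eq_mul, div_mul_cancel₀ _ hgx.ne'] at hc
  linarith [le_abs_self c]

theorem LinearMap.eq_zero_of_forall_le {𝕜 M : Type*} [Field 𝕜] [LinearOrder 𝕜]
    [IsStrictOrderedRing 𝕜] [AddCommGroup M] [Module 𝕜 M] (g : M →ₗ[𝕜] 𝕜) {c : 𝕜}
    (hg : ∀ x, c ≤ g x) : g = 0 := by
  have hnonneg (x : M) : 0 ≤ g x := by
    simpa using (-g).apply_nonpos_of_le_on_cone (K := univ) (fun _ _ _ _ ↦ mem_univ _)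
      (c := -c) (fun x _ ↦ by simpa using hg x) (mem_univ x)
  ext x
  simpa using le_antisymm (by simpa using hnonneg (-x)) (hnonneg x)

theorem LinearMap.apply_eq_dotProduct {ι R : Type*} [Fintype ι] [DecidableEq ι] [CommSemiring R]
    (f : (ι → R) →ₗ[R] R) (x : ι → R) : f x = (fun i ↦ f (Pi.single i 1)) ⬝ᵥ x := by
  rw [f.pi_apply_eq_sum_univ, dotProduct]
  refine Finset.sum_congr rfl fun i _ ↦ ?_
  rw [smul_eq_mul, mul_comm]
  congr
  ext j
  simp [Pi.single_apply, eq_comm]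

theorem closure_univ_pi_Iio {ι α : Type*} [LinearOrder α] [TopologicalSpace α] [OrderTopology α]
    [DenselyOrdered α] [NoMinOrder α] (b : ι → α) :
    closure (univ.pi fun i ↦ Iio (b i)) = Iic b := by
  simp [closure_pi_set, closure_Iio, pi_univ_Iic]

theorem exists_dual_of_forall_exists_le {ι E : Type*} [Fintype ι] [AddCommGroup E] [Module ℝ E]
    (L : E →ₗ[ℝ] ι → ℝ) (b : ι → ℝ) (h : ∀ u, ∃ i, b i ≤ L u i) :
    ∃ w : ι → ℝ, 0 ≤ w ∧ w ≠ 0 ∧ (∀ u, w ⬝ᵥ L u = 0) ∧ w ⬝ᵥ b ≤ 0 := by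
  classical
  have hdisj : Disjoint (univ.pi fun i ↦ Iio (b i)) (LinearMap.range L : Set (ι → ℝ)) := by
    rw [disjoint_left]
    rintro _ hlt ⟨u, rfl⟩
    obtain ⟨i, hi⟩ := h u
    exact (hi.trans_lt (hlt i (mem_univ i))).false
  obtain ⟨f, c, hf_lt, hf_ge⟩ := geometric_hahn_banach_open
    (convex_pi fun _ _ ↦ convex_Iio _) (isOpen_set_pi finite_univ fun _ _ ↦ isOpen_Iio)
    (LinearMap.range L).convex hdisj
  have hf_le : ∀ x ≤ b, f x ≤ c := by
    have : closure (univ.pi fun i ↦ Iio (b i)) ⊆ {x | f x ≤ c} :=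
      closure_minimal (fun x hx ↦ (hf_lt x hx).le) (isClosed_le f.continuous continuous_const)
    rwa [closure_univ_pi_Iio] at this
  have hfL : (f : (ι → ℝ) →ₗ[ℝ] ℝ) ∘ₗ L = 0 :=
    LinearMap.eq_zero_of_forall_le _ fun u ↦ hf_ge (L u) ⟨u, rfl⟩
  have hc : c ≤ 0 := by simpa using hf_ge 0 (zero_mem _)
  have hf_nonpos : ∀ x ≤ 0, f x ≤ 0 := fun x hx ↦
    (f : (ι → ℝ) →ₗ[ℝ] ℝ).apply_nonpos_of_le_on_cone (K := Iic 0)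
      (fun y hy t ht ↦ smul_nonpos_of_nonneg_of_nonpos ht.le hy) (c := c - f b)
      (fun y hy ↦ le_sub_iff_add_le.2 <| by simpa using hf_le (y + b) (by simpa using hy)) hx
  set w : ι → ℝ := fun i ↦ f (Pi.single i 1)
  have hfw (x : ι → ℝ) : f x = w ⬝ᵥ x := (f : (ι → ℝ) →ₗ[ℝ] ℝ).apply_eq_dotProduct x
  refine ⟨w, fun i ↦ by simpa using hf_nonpos (-Pi.single i 1) (by simp), ?_, fun u ↦ ?_, ?_⟩
  · rintro hw
    have := hf_lt (b - 1) fun i _ ↦ by simp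
    simp only [hfw, hw, zero_dotProduct] at this
    linarith
  · rw [← hfw]
    exact LinearMap.congr_fun hfL u
  · rw [← hfw]
    exact (hf_le b le_rfl).trans hc

theorem strict_farkas_reverse (n m : ℕ) (A : Matrix (Fin n) (Fin m) ℝ) (b : Fin n → ℝ)
    (hlam : ∀ lam : Fin n → ℝ, (∀ i, 0 ≤ lam i) → (∑ i, lam i) = 1 →
      (∀ j, (∑ i, lam i * A i j) = 0) → 0 < ∑ i, lam i * b i) :
    ∃ u : Fin m → ℝ, ∀ i, A.mulVec u i < b i := by
  by_contra! hno
  obtain ⟨w, hw_nonneg, hw_ne, hwA, hwb⟩ := exists_dual_of_forall_exists_le A.mulVecLin b hno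
  have hS : 0 < ∑ i, w i := Fintype.sum_pos (lt_of_le_of_ne hw_nonneg hw_ne.symm)
  have hcol (j : Fin m) : ∑ i, w i * A i j = 0 := by
    simpa [mulVec_single_one, dotProduct] using hwA (Pi.single j 1)
  have hpos := hlam (fun i ↦ w i / ∑ k, w k) (fun i ↦ div_nonneg (hw_nonneg i) hS.le)
    (by rw [← Finset.sum_div, div_self hS.ne'])
    (fun j ↦ by simp_rw [div_mul_eq_mul_div, ← Finset.sum_div, hcol, zero_div])
  simp_rw [div_mul_eq_mul_div, ← Finset.sum_div] at hpos
  exact (div_pos_iff_of_pos_right hS).1 hpos |>.not_ge hwb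
end

section
/- Level-set equality of the patched function: let h, V₂ : ℝ^n → ℝ with V₂(x) ≤ 1 whenever h(x) ≤ 1, and V₂(x) ≤ h(x) whenever 1−ε ≤ h(x) ≤ 1. Let b : ℝ^n → [0,1] satisfy b(x) = 1 when h(x) ≥ 1 and b(x) = 0 when h(x) ≤ 1−ε. Then W := (1−b)·V₂ + b·h satisfies {x | W(x) ≤ 1} = {x | h(x) ≤ 1}. -/
theorem patched_level_set (n : ℕ) (h V₂ b : (Fin n → ℝ) → ℝ) (ε : ℝ)
    (hε : 0 < ε) (hε1 : ε < 1)
    (hV₂le : ∀ x, h x ≤ 1 → V₂ x ≤ 1)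
    (hV₂h : ∀ x, 1 - ε ≤ h x → h x ≤ 1 → V₂ x ≤ h x)
    (hb01 : ∀ x, b x ∈ Set.Icc (0 : ℝ) 1)
    (hb1 : ∀ x, 1 ≤ h x → b x = 1)
    (hb0 : ∀ x, h x ≤ 1 - ε → b x = 0) :
    {x : Fin n → ℝ | (1 - b x) * V₂ x + b x * h x ≤ 1} = {x : Fin n → ℝ | h x ≤ 1} := by
  ext x
  obtain ⟨hb0x, hb1x⟩ := hb01 x
  simp only [Set.mem_setOf_eq]
  constructor
  · intro hW
    by_contra hh
    push_neg at hh
    rw [hb1 x hh.le] at hW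
    linarith
  · intro hh
    by_cases hc : h x ≤ 1 - ε
    · rw [hb0 x hc]
      simpa using hV₂le x hh
    · push_neg at hc
      have h1 := hV₂h x hc.le hh
      nlinarith
end
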